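/- arXiv:1809.00056 — 4 statements merged into one kernel-verified Lean document; each statement's English description precedes it below -/
import Mathlib

section
/- Let W be an m×m complex Hermitian positive definite matrix and let P, P_T > 0 satisfy P > 1/λ_min(W) and P_T > m/λ_min(W) − tr(W⁻¹), and let λ ≥ 0 be as in the full-rank solution (λ = 0 if m·P ≤ P_T, otherwise the solution of Σᵢ min(P, 1/λ − (W⁻¹)ᵢᵢ) = P_T). Then the capacity under the joint constraints equals C_joint(P_T, P) = log det(W) + Σᵢ log min(1/λ, P + (W⁻¹)ᵢᵢ) (interpreting min(1/λ, ·) as P + (W⁻¹)ᵢᵢ when λ = 0). -/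
open Matrix ComplexOrder

noncomputable def mutualInfo {m : ℕ} (W R : Matrix (Fin m) (Fin m) ℂ) : ℝ :=
  Real.log ((1 + W * R).det.re)

def jointSet (m : ℕ) (PT P : ℝ) : Set (Matrix (Fin m) (Fin m) ℂ) :=
  {R | R.PosSemidef ∧ R.trace.re ≤ PT ∧ ∀ i, (R i i).re ≤ P}

noncomputable def lamMin {m : ℕ} {W : Matrix (Fin m) (Fin m) ℂ} (hW : W.IsHermitian) : ℝ :=
  sInf (Set.range hW.eigenvalues)
/-- Capacity under the joint constraints. -/
noncomputable def Cjoint (m : ℕ) (W : Matrix (Fin m) (Fin m) ℂ) (PT P : ℝ) : ℝ :=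
  sSup (mutualInfo W '' jointSet m PT P)

/-!
Since `1 + W R = W (W⁻¹ + R)`, the capacity is `log det W` plus the maximum of
`log det (W⁻¹ + R)`. Hadamard's inequality bounds the latter by `∑ᵢ log (vᵢ + rᵢ)` with
`vᵢ = (W⁻¹)ᵢᵢ` and `rᵢ = Rᵢᵢ`, and the tangent-line bound `log x ≤ log d + (x - d) / d` at the
water levels `dᵢ = min (1/λ) (P + vᵢ)`, combined with the water-filling conditions on `λ`, bounds
that sum by `∑ᵢ log dᵢ`. The bound is attained by `R = diag d - W⁻¹`: the hypotheses on `P` and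
`P_T` force every `dᵢ` above `1 / λ_min(W)`, which dominates `W⁻¹` in the Loewner order, so this
`R` is positive semidefinite.
-/

theorem Real.sum_log_le_sum_log_of_kkt {ι : Type*} [Fintype ι] {x d : ι → ℝ} {lam : ℝ}
    (hx : ∀ i, 0 < x i) (hd : ∀ i, 0 < d i) (hcap : ∀ i, lam * d i ≤ 1)
    (hslack : ∀ i, lam * d i = 1 ∨ x i ≤ d i) (hbudget : lam * ∑ i, (x i - d i) ≤ 0) :
    ∑ i, Real.log (x i) ≤ ∑ i, Real.log (d i) := by
  have hterm : ∀ i, Real.log (x i) ≤ Real.log (d i) + lam * (x i - d i) := fun i => by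
    have htangent : Real.log (x i) - Real.log (d i) ≤ (x i - d i) / d i := by
      rw [← Real.log_div (hx i).ne' (hd i).ne', sub_div, div_self (hd i).ne']
      exact Real.log_le_sub_one_of_pos (div_pos (hx i) (hd i))
    have hslope : (x i - d i) / d i ≤ lam * (x i - d i) := by
      rw [div_le_iff₀ (hd i)]
      rcases hslack i with h | h
      · linear_combination (d i - x i) * h
      · nlinarith [mul_nonneg (sub_nonneg.2 h) (sub_nonneg.2 (hcap i))]
    linarith
  calc ∑ i, Real.log (x i) ≤ ∑ i, (Real.log (d i) + lam * (x i - d i)) :=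
        Finset.sum_le_sum fun i _ => hterm i
    _ = ∑ i, Real.log (d i) + lam * ∑ i, (x i - d i) := by
        rw [Finset.sum_add_distrib, Finset.mul_sum]
    _ ≤ ∑ i, Real.log (d i) := by linarith

noncomputable def waterLevel (lam P v : ℝ) : ℝ :=
  if lam = 0 then P + v else min (1 / lam) (P + v)

lemma waterLevel_le (lam P v : ℝ) : waterLevel lam P v ≤ P + v := by
  unfold waterLevel
  split_ifs
  exacts [le_rfl, min_le_right _ _]

lemma waterLevel_sub_eq {lam : ℝ} (hlam : lam ≠ 0) (P v : ℝ) :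
    waterLevel lam P v - v = min P (1 / lam - v) := by
  rw [waterLevel, if_neg hlam, ← min_sub_sub_right, add_sub_cancel_right, min_comm]

lemma mul_waterLevel_le_one {lam : ℝ} (hlam : 0 ≤ lam) (P v : ℝ) :
    lam * waterLevel lam P v ≤ 1 := by
  rcases hlam.eq_or_lt with rfl | hlam
  · simp
  · rw [waterLevel, if_neg hlam.ne']
    calc lam * min (1 / lam) (P + v) ≤ lam * (1 / lam) := by gcongr; exact min_le_left _ _
      _ = 1 := by field_simp

lemma waterLevel_pos {lam P v : ℝ} (hlam : 0 ≤ lam) (hP : 0 ≤ P) (hv : 0 < v) :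
    0 < waterLevel lam P v := by
  rcases hlam.eq_or_lt with rfl | hlam
  · rw [waterLevel, if_pos rfl]; linarith
  · rw [waterLevel, if_neg hlam.ne']
    exact lt_min (one_div_pos.2 hlam) (by linarith)

lemma mul_waterLevel_eq_one_or_eq (lam P v : ℝ) :
    lam * waterLevel lam P v = 1 ∨ waterLevel lam P v = P + v := by
  by_cases hlam : lam = 0
  · exact Or.inr (if_pos hlam)
  · rw [waterLevel, if_neg hlam]
    rcases min_choice (1 / lam) (P + v) with h | h <;> rw [h]
    exacts [Or.inl (mul_one_div_cancel hlam), Or.inr rfl]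

section WaterFilling

variable {ι : Type*} [Fintype ι] {lam P PT : ℝ} {v : ι → ℝ}

def IsWaterFillingLevel (P PT lam : ℝ) (v : ι → ℝ) : Prop :=
  lam = 0 ∧ Fintype.card ι * P ≤ PT ∨ 0 < lam ∧ ∑ i, min P (1 / lam - v i) = PT

namespace IsWaterFillingLevel

variable (h : IsWaterFillingLevel P PT lam v)
include h

lemma nonneg : 0 ≤ lam := by
  rcases h with ⟨rfl, -⟩ | ⟨hlam, -⟩
  exacts [le_rfl, hlam.le]

lemma sum_waterLevel_sub_le : ∑ i, (waterLevel lam P (v i) - v i) ≤ PT := by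
  rcases h with ⟨rfl, hPT⟩ | ⟨hlam, hPT⟩
  · simpa [waterLevel] using hPT
  · simp only [waterLevel_sub_eq hlam.ne', hPT, le_rfl]

lemma lt_waterLevel {c : ℝ} (hc : Fintype.card ι * c - ∑ i, v i < PT) (i : ι)
    (hcP : c < P + v i) : c < waterLevel lam P (v i) := by
  rcases h with ⟨rfl, -⟩ | ⟨hlam, hPT⟩
  · simpa [waterLevel] using hcP
  · rw [waterLevel, if_neg hlam.ne']
    refine lt_min ?_ hcP
    have hle : PT ≤ Fintype.card ι * (1 / lam) - ∑ i, v i := by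
      rw [← hPT, ← nsmul_eq_mul, ← Finset.card_univ, ← Finset.sum_const,
        ← Finset.sum_sub_distrib]
      exact Finset.sum_le_sum fun j _ => min_le_right _ _
    have hcard : (0 : ℝ) < Fintype.card ι := by exact_mod_cast Fintype.card_pos_iff.2 ⟨i⟩
    exact lt_of_mul_lt_mul_left (by linarith) hcard.le

lemma sum_log_add_le (hv : ∀ i, 0 < v i) {r : ι → ℝ} (hr0 : ∀ i, 0 ≤ r i)
    (hrP : ∀ i, r i ≤ P) (hrT : ∑ i, r i ≤ PT) :
    ∑ i, Real.log (v i + r i) ≤ ∑ i, Real.log (waterLevel lam P (v i)) := by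
  refine Real.sum_log_le_sum_log_of_kkt (fun i => by linarith [hv i, hr0 i]) (fun i => ?_)
    (fun i => mul_waterLevel_le_one h.nonneg P (v i)) (fun i => ?_) ?_
  · exact waterLevel_pos h.nonneg ((hr0 i).trans (hrP i)) (hv i)
  · refine (mul_waterLevel_eq_one_or_eq lam P (v i)).imp_right fun hlevel => ?_
    linarith [hrP i]
  · rcases h with ⟨rfl, -⟩ | ⟨hlam, hPT⟩
    · simp
    · have hsum : ∑ i, (v i + r i - waterLevel lam P (v i)) = ∑ i, r i - PT := by
        rw [← hPT, ← Finset.sum_sub_distrib]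
        refine Finset.sum_congr rfl fun i _ => ?_
        rw [← waterLevel_sub_eq hlam.ne']
        ring
      rw [hsum]
      exact mul_nonpos_of_nonneg_of_nonpos hlam.le (by linarith)

end IsWaterFillingLevel

end WaterFilling

namespace Matrix

variable {𝕜 n : Type*} [RCLike 𝕜] [Fintype n] [DecidableEq n]

theorem PosSemidef.re_det_le_one_of_trace_eq_card {B : Matrix n n 𝕜} (hB : B.PosSemidef)
    (htr : B.trace = Fintype.card n) : RCLike.re B.det ≤ 1 := by
  set ν := hB.1.eigenvalues
  have hsum : ∑ i, ν i = Fintype.card n := by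
    have := hB.1.trace_eq_sum_eigenvalues
    rw [htr] at this
    exact_mod_cast this.symm
  rw [hB.1.det_eq_prod_eigenvalues, ← RCLike.ofReal_prod, RCLike.ofReal_re]
  calc ∏ i, ν i ≤ ∏ i, Real.exp (ν i - 1) :=
        Finset.prod_le_prod (fun i _ => hB.eigenvalues_nonneg i)
          fun i _ => by linarith [Real.add_one_le_exp (ν i - 1)]
    _ = 1 := by
        rw [← Real.exp_sum, Finset.sum_sub_distrib, hsum]
        simp

theorem PosDef.re_det_le_prod_diag {A : Matrix n n 𝕜} (hA : A.PosDef) :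
    RCLike.re A.det ≤ ∏ i, RCLike.re (A i i) := by
  set a : n → ℝ := fun i => RCLike.re (A i i)
  have ha : ∀ i, 0 < a i := fun i => (RCLike.pos_iff.mp hA.diag_pos).1
  set s : n → ℝ := fun i => (√(a i))⁻¹
  have hs : ∀ i, s i ^ 2 * a i = 1 := fun i => by
    simp only [s, inv_pow, Real.sq_sqrt (ha i).le, inv_mul_cancel₀ (ha i).ne']
  set D : Matrix n n 𝕜 := diagonal fun i => (s i : 𝕜)
  have hD : Dᴴ = D := by simp [D, diagonal_conjTranspose]
  have hB : (D * A * D).PosSemidef := by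
    simpa only [hD] using hA.posSemidef.conjTranspose_mul_mul_same D
  have hBdiag : ∀ i, (D * A * D) i i = 1 := fun i => by
    rw [mul_diagonal, diagonal_mul, ← hA.1.coe_re_apply_self i]
    exact_mod_cast (show s i * a i * s i = 1 by linear_combination hs i)
  have htr : (D * A * D).trace = Fintype.card n := by simp [trace, hBdiag]
  have hdet : RCLike.re (D * A * D).det = (∏ i, a i)⁻¹ * RCLike.re A.det := by
    rw [det_mul, det_mul, det_diagonal, ← RCLike.ofReal_prod, mul_comm, ← mul_assoc,
      ← RCLike.ofReal_mul, RCLike.re_ofReal_mul, ← Finset.prod_mul_distrib,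
      ← Finset.prod_inv_distrib]
    congr 1
    exact Finset.prod_congr rfl fun i _ => eq_inv_of_mul_eq_one_left (by linear_combination hs i)
  have hpos : 0 < ∏ i, a i := Finset.prod_pos fun i _ => ha i
  have := hB.re_det_le_one_of_trace_eq_card htr
  rwa [hdet, inv_mul_le_iff₀ hpos, mul_one] at this

open scoped MatrixOrder in
theorem PosDef.posSemidef_diagonal_sub_inv {W : Matrix n n 𝕜} (hW : W.PosDef) {c : ℝ}
    (hc : ∀ i, (hW.1.eigenvalues i)⁻¹ ≤ c) {d : n → ℝ} (hd : ∀ i, c ≤ d i) :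
    (diagonal (fun i => (d i : 𝕜)) - W⁻¹).PosSemidef := by
  have hinv : W⁻¹ ≤ algebraMap ℝ _ c := by
    rw [le_algebraMap_iff_spectrum_le hW.inv.1]
    intro x hx
    lift W to (Matrix n n 𝕜)ˣ using hW.isUnit
    rw [← coe_units_inv, ← spectrum.inv₀_mem_iff,
      hW.1.spectrum_real_eq_range_eigenvalues] at hx
    obtain ⟨i, hi⟩ := hx
    simpa [hi] using hc i
  have hdiag : algebraMap ℝ (Matrix n n 𝕜) c ≤ diagonal (fun i => (d i : 𝕜)) := by
    rw [le_iff, algebraMap_eq_diagonal, diagonal_sub, posSemidef_diagonal_iff]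
    intro i
    simp only [Pi.algebraMap_apply, RCLike.algebraMap_eq_ofReal]
    rw [← RCLike.ofReal_sub, RCLike.ofReal_nonneg, sub_nonneg]
    exact hd i
  exact le_iff.1 (hinv.trans hdiag)

end Matrix

section Capacity

variable {m : ℕ} {W R : Matrix (Fin m) (Fin m) ℂ}

lemma inv_eigenvalues_le_inv_lamMin (hW : W.PosDef) (i : Fin m) :
    (hW.1.eigenvalues i)⁻¹ ≤ 1 / lamMin hW.1 := by
  have hfin := Set.finite_range hW.1.eigenvalues
  obtain ⟨j, hj⟩ := (Set.range_nonempty_iff_nonempty.2 ⟨i⟩).csInf_mem hfin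
  rw [one_div, lamMin, ← hj]
  exact inv_anti₀ (hW.eigenvalues_pos j) (hj ▸ csInf_le hfin.bddBelow ⟨i, rfl⟩)

lemma mutualInfo_eq_log_det_add_log_det (hW : W.PosDef) (hX : (W⁻¹ + R).PosDef) :
    mutualInfo W R = Real.log W.det.re + Real.log (W⁻¹ + R).det.re := by
  obtain ⟨hWre, hWim⟩ := Complex.pos_iff.1 hW.det_pos
  obtain ⟨hXre, hXim⟩ := Complex.pos_iff.1 hX.det_pos
  have hfactor : 1 + W * R = W * (W⁻¹ + R) := by
    rw [Matrix.mul_add, mul_nonsing_inv _ ((isUnit_iff_isUnit_det W).1 hW.isUnit)]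
  rw [mutualInfo, hfactor, det_mul, Complex.mul_re, ← hWim, ← hXim, zero_mul, sub_zero,
    Real.log_mul hWre.ne' hXre.ne']

lemma mutualInfo_le_of_mem_jointSet (hW : W.PosDef) {P PT lam : ℝ}
    (hR : R ∈ jointSet m PT P) (hlam : IsWaterFillingLevel P PT lam fun i => (W⁻¹ i i).re) :
    mutualInfo W R ≤
      Real.log W.det.re + ∑ i, Real.log (waterLevel lam P (W⁻¹ i i).re) := by
  obtain ⟨hRpsd, hRtr, hRP⟩ := hR
  have hX := hW.inv.add_posSemidef hRpsd
  rw [mutualInfo_eq_log_det_add_log_det hW hX]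
  gcongr
  calc Real.log (W⁻¹ + R).det.re ≤ Real.log (∏ i, ((W⁻¹ + R) i i).re) :=
        Real.log_le_log (Complex.pos_iff.1 hX.det_pos).1 hX.re_det_le_prod_diag
    _ = ∑ i, Real.log ((W⁻¹ i i).re + (R i i).re) := by
        rw [Real.log_prod fun i _ => (Complex.pos_iff.1 hX.diag_pos).1.ne']
        simp
    _ ≤ _ := hlam.sum_log_add_le (fun i => (Complex.pos_iff.1 hW.inv.diag_pos).1)
        (fun i => (Complex.nonneg_iff.1 hRpsd.diag_nonneg).1) hRP
        (by simpa [trace] using hRtr)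

lemma mutualInfo_diagonal_sub_inv (hW : W.PosDef) {d : Fin m → ℝ} (hd : ∀ i, 0 < d i) :
    mutualInfo W (diagonal (fun i => (d i : ℂ)) - W⁻¹) =
      Real.log W.det.re + ∑ i, Real.log (d i) := by
  have hX : W⁻¹ + (diagonal (fun i => (d i : ℂ)) - W⁻¹) = diagonal fun i => (d i : ℂ) :=
    add_sub_cancel _ _
  have hXpos : (diagonal fun i => (d i : ℂ)).PosDef :=
    posDef_diagonal_iff.2 fun i => Complex.zero_lt_real.2 (hd i)
  rw [mutualInfo_eq_log_det_add_log_det hW (by rwa [hX]), hX, det_diagonal,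
    ← Complex.ofReal_prod, Complex.ofReal_re, Real.log_prod fun i _ => (hd i).ne']

lemma diagonal_sub_inv_mem_jointSet {P PT : ℝ} {d : Fin m → ℝ}
    (hpsd : (diagonal (fun i => (d i : ℂ)) - W⁻¹).PosSemidef)
    (hP : ∀ i, d i ≤ P + (W⁻¹ i i).re) (hPT : ∑ i, (d i - (W⁻¹ i i).re) ≤ PT) :
    diagonal (fun i => (d i : ℂ)) - W⁻¹ ∈ jointSet m PT P := by
  refine ⟨hpsd, by simpa [trace] using hPT, fun i => ?_⟩
  simpa using hP i

end Capacity

theorem stmt1_general (m : ℕ) (W : Matrix (Fin m) (Fin m) ℂ) (hW : W.PosDef)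
    (P PT : ℝ)
    (hPlow : 1 / lamMin hW.1 < P)
    (hPTlow : m / lamMin hW.1 - (W⁻¹).trace.re < PT)
    (lam : ℝ)
    (hlam1 : m * P ≤ PT → lam = 0)
    (hlam2 : PT < m * P → 0 < lam ∧ ∑ i, min P (1 / lam - (W⁻¹ i i).re) = PT) :
    Cjoint m W PT P =
      Real.log W.det.re +
        ∑ i, Real.log (if lam = 0 then P + (W⁻¹ i i).re
          else min (1 / lam) (P + (W⁻¹ i i).re)) := by
  set v : Fin m → ℝ := fun i => (W⁻¹ i i).re
  set d : Fin m → ℝ := fun i => waterLevel lam P (v i)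
  have hlam : IsWaterFillingLevel P PT lam v := by
    rcases le_or_gt (m * P) PT with h | h
    · exact Or.inl ⟨hlam1 h, by simpa using h⟩
    · exact Or.inr (hlam2 h)
  have hbudget : Fintype.card (Fin m) * (1 / lamMin hW.1) - ∑ i, v i < PT := by
    rw [Fintype.card_fin, ← div_eq_mul_one_div]
    simpa [v, trace] using hPTlow
  have hc : ∀ i, 1 / lamMin hW.1 < d i := fun i =>
    hlam.lt_waterLevel hbudget i (by linarith [(Complex.pos_iff.1 (hW.inv.diag_pos (i := i))).1])
  have hd : ∀ i, 0 < d i := fun i =>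
    (inv_pos.2 (hW.eigenvalues_pos i)).trans_le (inv_eigenvalues_le_inv_lamMin hW i) |>.trans (hc i)
  have hmem := diagonal_sub_inv_mem_jointSet
    (hW.posSemidef_diagonal_sub_inv (inv_eigenvalues_le_inv_lamMin hW) fun i => (hc i).le)
    (fun i => waterLevel_le lam P (v i)) hlam.sum_waterLevel_sub_le
  refine IsGreatest.csSup_eq ⟨⟨_, hmem, mutualInfo_diagonal_sub_inv hW hd⟩, ?_⟩
  rintro _ ⟨R, hR, rfl⟩
  exact mutualInfo_le_of_mem_jointSet hW hR hlam

/-- The capacity under the joint constraints in the full-rank regime: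
`C = log det W + Σᵢ log min(1/λ, P + (W⁻¹)ᵢᵢ)`, where `min(1/λ, ·)` is read as
`P + (W⁻¹)ᵢᵢ` when `λ = 0`. -/
theorem stmt1 (m : ℕ) (hm : 1 ≤ m) (W : Matrix (Fin m) (Fin m) ℂ) (hW : W.PosDef)
    (P PT : ℝ) (hP : 0 < P) (hPT : 0 < PT)
    (hPlow : 1 / lamMin hW.1 < P)
    (hPTlow : m / lamMin hW.1 - (W⁻¹).trace.re < PT)
    (lam : ℝ) (hlam0 : 0 ≤ lam)
    (hlam1 : m * P ≤ PT → lam = 0)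
    (hlam2 : PT < m * P → 0 < lam ∧ ∑ i, min P (1 / lam - (W⁻¹ i i).re) = PT) :
    Cjoint m W PT P =
      Real.log W.det.re +
        ∑ i, Real.log (if lam = 0 then P + (W⁻¹ i i).re
          else min (1 / lam) (P + (W⁻¹ i i).re)) :=
  stmt1_general m W hW P PT hPlow hPTlow lam hlam1 hlam2
end

section
/- Let W be an m×m complex Hermitian positive definite matrix, let P > 1/λ_min(W), and let λ be a real number with 0 ≤ λ < λ_min(W). Define the Hermitian matrix R by Rᵢᵢ = min(P, 1/λ − (W⁻¹)ᵢᵢ) (interpreting 1/λ = +∞, i.e. Rᵢᵢ = P, when λ = 0) and Rᵢⱼ = −(W⁻¹)ᵢⱼ for i ≠ j. Then R is positive definite; in particular all its diagonal entries satisfy Rᵢᵢ > 0. -/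
open Matrix ComplexOrder

/-- Diagonal entries: `min(P, 1/λ − (W⁻¹)ᵢᵢ)` (equal to `P` when `λ = 0`);
off-diagonal entries: `−(W⁻¹)ᵢⱼ`. -/
noncomputable def Rstar {m : ℕ} (W : Matrix (Fin m) (Fin m) ℂ) (P lam : ℝ) :
    Matrix (Fin m) (Fin m) ℂ :=
  fun i j => if i = j then ((if lam = 0 then P else min P (1 / lam - (W⁻¹ i i).re) : ℝ) : ℂ)
    else -(W⁻¹ i j)

/-!
Every eigenvalue of `W` is at least `λ_min`, so `λ_min⁻¹ • 1 - W⁻¹` is positive semidefinite.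
`R` differs from it only on the diagonal, by `Rᵢᵢ + (W⁻¹)ᵢᵢ - λ_min⁻¹`, which is positive: it is
either `P + (W⁻¹)ᵢᵢ - λ_min⁻¹` or at least `λ⁻¹ - λ_min⁻¹`. A positive diagonal matrix plus a
positive semidefinite one is positive definite.
-/

open scoped MatrixOrder

lemma Matrix.PosDef.inv_le_algebraMap_inv {n 𝕜 : Type*} [Fintype n] [DecidableEq n] [RCLike 𝕜]
    {A : Matrix n n 𝕜} (hA : A.PosDef) {c : ℝ} (hc : 0 < c) (h : ∀ i, c ≤ hA.1.eigenvalues i) :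
    A⁻¹ ≤ algebraMap ℝ _ c⁻¹ := by
  refine le_algebraMap_of_spectrum_le (fun x hx => ?_) hA.inv.1.isSelfAdjoint
  lift A to (Matrix n n 𝕜)ˣ using hA.isUnit
  rw [← coe_units_inv, ← spectrum.inv₀_mem_inv_iff, inv_inv,
    hA.1.spectrum_real_eq_range_eigenvalues] at hx
  obtain ⟨i, hi⟩ := hx
  have hx : 0 < x⁻¹ := hi ▸ hA.eigenvalues_pos i
  exact (le_inv_comm₀ (inv_pos.mp hx) hc).mpr (hi ▸ h i)

lemma lamMin_le_eigenvalues {m : ℕ} {W : Matrix (Fin m) (Fin m) ℂ} (hW : W.IsHermitian)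
    (i : Fin m) : lamMin hW ≤ hW.eigenvalues i :=
  csInf_le (Set.finite_range _).bddBelow ⟨i, rfl⟩

lemma lamMin_pos {m : ℕ} [NeZero m] {W : Matrix (Fin m) (Fin m) ℂ} (hW : W.PosDef) :
    0 < lamMin hW.1 := by
  obtain ⟨i, hi⟩ := exists_eq_ciInf_of_finite (f := hW.1.eigenvalues)
  exact (hi ▸ hW.eigenvalues_pos i : 0 < ⨅ i, hW.1.eigenvalues i)

lemma inv_lt_ite_min_add {a c P lam : ℝ} (ha : 0 < a) (hP : c⁻¹ < P) (hlam0 : 0 ≤ lam)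
    (hlam : lam < c) : c⁻¹ < (if lam = 0 then P else min P (1 / lam - a)) + a := by
  split_ifs with h
  · linarith
  · have : c⁻¹ < 1 / lam := one_div lam ▸ inv_strictAnti₀ (hlam0.lt_of_ne' h) hlam
    rcases min_choice P (1 / lam - a) with h' | h' <;> rw [h'] <;> linarith

lemma Rstar_apply_self {m : ℕ} (W : Matrix (Fin m) (Fin m) ℂ) (P lam : ℝ) (i : Fin m) :
    Rstar W P lam i i = ((if lam = 0 then P else min P (1 / lam - (W⁻¹ i i).re) : ℝ) : ℂ) :=
  if_pos rfl

lemma Rstar_eq_diagonal_add {m : ℕ} (W : Matrix (Fin m) (Fin m) ℂ) (P lam c : ℝ) :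
    Rstar W P lam =
      diagonal (fun i => Rstar W P lam i i + W⁻¹ i i - c) + (algebraMap ℝ _ c - W⁻¹) := by
  ext i j
  rcases eq_or_ne i j with rfl | h
  · simp [algebraMap_eq_diagonal]
  · simp [algebraMap_eq_diagonal, h, Rstar]

/-- Key positivity lemma: for `P > 1/λ_min(W)` and `0 ≤ λ < λ_min(W)`, the matrix `R`
with diagonal `min(P, 1/λ − (W⁻¹)ᵢᵢ)` and off-diagonal `−(W⁻¹)ᵢⱼ` is positive definite,
and in particular its diagonal entries are positive. -/
theorem stmt2 (m : ℕ) (hm : 1 ≤ m) (W : Matrix (Fin m) (Fin m) ℂ) (hW : W.PosDef)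
    (P : ℝ) (hPlow : 1 / lamMin hW.1 < P)
    (lam : ℝ) (hlam0 : 0 ≤ lam) (hlam1 : lam < lamMin hW.1) :
    (Rstar W P lam).PosDef ∧ ∀ i, 0 < ((Rstar W P lam) i i).re := by
  have : NeZero m := ⟨by omega⟩
  set c := lamMin hW.1
  have hdiag i : 0 < Rstar W P lam i i + W⁻¹ i i - (c⁻¹ : ℝ) := by
    rw [← hW.inv.1.coe_re_apply_self i, RCLike.re_to_complex, RCLike.ofReal_eq_complex_ofReal,
      Rstar_apply_self]
    have hWii : 0 < (W⁻¹ i i).re := (Complex.pos_iff.mp hW.inv.diag_pos).1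
    exact_mod_cast sub_pos.mpr <| inv_lt_ite_min_add hWii (one_div c ▸ hPlow) hlam0 hlam1
  have hWinv_le : W⁻¹ ≤ algebraMap ℝ _ c⁻¹ :=
    hW.inv_le_algebraMap_inv (lamMin_pos hW) (lamMin_le_eigenvalues hW.1)
  have hR : (Rstar W P lam).PosDef := by
    rw [Rstar_eq_diagonal_add W P lam c⁻¹]
    exact (posDef_diagonal_iff.mpr hdiag).add_posSemidef hWinv_le
  exact ⟨hR, fun i => (Complex.pos_iff.mp hR.diag_pos).1⟩
end

section
/- Let W be an m×m complex Hermitian positive definite matrix. Then C_PAC(P) − m·log P → log det(W) as P → +∞; i.e., at high SNR the isotropic covariance P·I is asymptotically optimal under the per-antenna constraints, and C_PAC(P) ≈ log det(W) + m·log P. -/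
open Matrix ComplexOrder

/-- The per-antenna-only constraint set and its capacity. -/
def pacSet (m : ℕ) (P : ℝ) : Set (Matrix (Fin m) (Fin m) ℂ) :=
  {R | R.PosSemidef ∧ ∀ i, (R i i).re ≤ P}

noncomputable def Cpac (m : ℕ) (W : Matrix (Fin m) (Fin m) ℂ) (P : ℝ) : ℝ :=
  sSup (mutualInfo W '' pacSet m P)

/-!
The isotropic covariance `P • 1` is admissible and gives
`log det (1 + P W) ≥ log det (P W) = log det W + m log P`. Conversely, for admissible `R`,
`det (1 + W R) = det W · det (W⁻¹ + R)`, and bounding `log` of each eigenvalue of `W⁻¹ + R` by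
its tangent line at `P` gives `log det (W⁻¹ + R) ≤ m log P + tr (W⁻¹ + R) / P - m`, which is at
most `m log P + tr W⁻¹ / P` because `tr R ≤ m P`. So `C_PAC(P) - m log P` is squeezed between
`log det W` and `log det W + tr W⁻¹ / P`.
-/

open Filter Topology Real

namespace Matrix

variable {n 𝕜 : Type*} [Fintype n] [DecidableEq n] [RCLike 𝕜] {A B : Matrix n n 𝕜}

lemma IsHermitian.re_det_eq_prod_eigenvalues (hA : A.IsHermitian) :
    RCLike.re A.det = ∏ i, hA.eigenvalues i := by
  rw [hA.det_eq_prod_eigenvalues, ← RCLike.ofReal_prod, RCLike.ofReal_re]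

lemma IsHermitian.re_trace_eq_sum_eigenvalues (hA : A.IsHermitian) :
    RCLike.re A.trace = ∑ i, hA.eigenvalues i := by
  rw [hA.trace_eq_sum_eigenvalues, ← RCLike.ofReal_sum, RCLike.ofReal_re]

lemma IsHermitian.re_det_mul (hA : A.IsHermitian) (hB : B.IsHermitian) :
    RCLike.re (A * B).det = RCLike.re A.det * RCLike.re B.det := by
  rw [det_mul, hA.det_eq_prod_eigenvalues, hB.det_eq_prod_eigenvalues, ← RCLike.ofReal_prod,
    ← RCLike.ofReal_prod, ← RCLike.ofReal_mul, RCLike.ofReal_re, RCLike.ofReal_re,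
    RCLike.ofReal_re]

lemma IsHermitian.det_one_add_smul (hA : A.IsHermitian) (t : ℝ) :
    (1 + (t : 𝕜) • A).det = ∏ i, ((1 + t * hA.eigenvalues i : ℝ) : 𝕜) := by
  conv_lhs => rw [hA.spectral_theorem]
  rw [← map_one (Unitary.conjStarAlgAut 𝕜 _ hA.eigenvectorUnitary), ← map_smul, ← map_add,
    Unitary.conjStarAlgAut_apply, det_mul, det_mul, mul_right_comm, ← det_mul,
    Unitary.mul_star_self_of_mem hA.eigenvectorUnitary.2, det_one, one_mul, ← diagonal_one,
    ← diagonal_smul, diagonal_add, det_diagonal]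
  simp

lemma PosSemidef.pow_mul_re_det_le_re_det_one_add_smul (hA : A.PosSemidef) {t : ℝ}
    (ht : 0 ≤ t) : t ^ Fintype.card n * RCLike.re A.det ≤ RCLike.re (1 + (t : 𝕜) • A).det := by
  rw [hA.isHermitian.det_one_add_smul, ← RCLike.ofReal_prod, RCLike.ofReal_re,
    hA.isHermitian.re_det_eq_prod_eigenvalues, ← Finset.card_univ, ← Finset.prod_const,
    ← Finset.prod_mul_distrib]
  exact Finset.prod_le_prod (fun i _ => mul_nonneg ht (hA.eigenvalues_nonneg i))
    (fun i _ => by linarith)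

lemma PosDef.re_det_pos (hA : A.PosDef) : 0 < RCLike.re A.det := by
  rw [hA.isHermitian.re_det_eq_prod_eigenvalues]
  exact Finset.prod_pos fun i _ => hA.eigenvalues_pos i

lemma PosDef.log_re_det_le (hA : A.PosDef) {t : ℝ} (ht : 0 < t) :
    log (RCLike.re A.det) ≤
      Fintype.card n * log t + RCLike.re A.trace / t - Fintype.card n := by
  have hpos := hA.eigenvalues_pos
  have htangent (i : n) : log (hA.isHermitian.eigenvalues i) ≤
      log t + hA.isHermitian.eigenvalues i / t - 1 := by
    have := log_le_sub_one_of_pos (div_pos (hpos i) ht)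
    rw [log_div (hpos i).ne' ht.ne'] at this
    linarith
  rw [hA.isHermitian.re_det_eq_prod_eigenvalues, hA.isHermitian.re_trace_eq_sum_eigenvalues,
    log_prod fun i _ => (hpos i).ne', Finset.sum_div]
  calc ∑ i, log (hA.isHermitian.eigenvalues i)
      ≤ ∑ i, (log t + hA.isHermitian.eigenvalues i / t - 1) :=
        Finset.sum_le_sum fun i _ => htangent i
    _ = _ := by simp only [Finset.sum_sub_distrib, Finset.sum_add_distrib, Finset.sum_const,
        Finset.card_univ, nsmul_eq_mul, mul_one]

end Matrix

variable {m : ℕ} {W R : Matrix (Fin m) (Fin m) ℂ} {P : ℝ}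

lemma trace_re_le_of_mem_pacSet (hR : R ∈ pacSet m P) : R.trace.re ≤ m * P := by
  simpa [trace, Complex.re_sum] using Finset.sum_le_sum fun i (_ : i ∈ Finset.univ) => hR.2 i

lemma smul_one_mem_pacSet (hP : 0 ≤ P) : (P : ℂ) • (1 : Matrix (Fin m) (Fin m) ℂ) ∈ pacSet m P :=
  ⟨PosSemidef.one.smul (by exact_mod_cast hP), fun i => by simp⟩

lemma mutualInfo_eq_log_det_add (hW : W.PosDef) (hR : R.PosSemidef) :
    mutualInfo W R = log W.det.re + log (W⁻¹ + R).det.re := by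
  have hA : (W⁻¹ + R).PosDef := hW.inv.add_posSemidef hR
  have hfactor : 1 + W * R = W * (W⁻¹ + R) := by
    rw [mul_add, mul_nonsing_inv _ (isUnit_iff_ne_zero.mpr hW.det_pos.ne')]
  rw [mutualInfo, hfactor, ← RCLike.re_to_complex, hW.isHermitian.re_det_mul hA.isHermitian]
  exact log_mul hW.re_det_pos.ne' hA.re_det_pos.ne'

lemma mutualInfo_le_of_mem_pacSet (hW : W.PosDef) (hP : 0 < P) (hR : R ∈ pacSet m P) :
    mutualInfo W R ≤ log W.det.re + m * log P + W⁻¹.trace.re / P := by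
  have hdet := (hW.inv.add_posSemidef hR.1).log_re_det_le hP
  rw [Fintype.card_fin, RCLike.re_to_complex, RCLike.re_to_complex, trace_add,
    Complex.add_re, add_div] at hdet
  have htrace : R.trace.re / P ≤ m := by
    rw [div_le_iff₀ hP]
    exact trace_re_le_of_mem_pacSet hR
  rw [mutualInfo_eq_log_det_add hW hR.1]
  linarith

lemma log_det_add_le_mutualInfo_smul_one (hW : W.PosDef) (hP : 0 < P) :
    log W.det.re + m * log P ≤ mutualInfo W ((P : ℂ) • 1) := by
  have hdet : 0 < W.det.re := hW.re_det_pos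
  have hmono := hW.posSemidef.pow_mul_re_det_le_re_det_one_add_smul hP.le
  rw [Fintype.card_fin, RCLike.re_to_complex, RCLike.re_to_complex] at hmono
  rw [mutualInfo, Matrix.mul_smul, mul_one]
  calc log W.det.re + m * log P = log (P ^ m * W.det.re) := by
        rw [log_mul (by positivity) hdet.ne', log_pow]; ring
    _ ≤ log (1 + (P : ℂ) • W).det.re := log_le_log (by positivity) hmono

lemma Cpac_le (hW : W.PosDef) (hP : 0 < P) :
    Cpac m W P ≤ log W.det.re + m * log P + W⁻¹.trace.re / P :=
  csSup_le ⟨_, Set.mem_image_of_mem _ (smul_one_mem_pacSet hP.le)⟩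
    (Set.forall_mem_image.2 fun _ hR => mutualInfo_le_of_mem_pacSet hW hP hR)

lemma log_det_add_le_Cpac (hW : W.PosDef) (hP : 0 < P) :
    log W.det.re + m * log P ≤ Cpac m W P :=
  (log_det_add_le_mutualInfo_smul_one hW hP).trans <|
    le_csSup ⟨_, Set.forall_mem_image.2 fun _ hR => mutualInfo_le_of_mem_pacSet hW hP hR⟩
      (Set.mem_image_of_mem _ (smul_one_mem_pacSet hP.le))

theorem stmt14_general (m : ℕ) (W : Matrix (Fin m) (Fin m) ℂ) (hW : W.PosDef) :
    Filter.Tendsto (fun P : ℝ => Cpac m W P - m * Real.log P)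
      Filter.atTop (nhds (Real.log W.det.re)) := by
  have hupper : Tendsto (fun P : ℝ => log W.det.re + W⁻¹.trace.re / P) atTop
      (𝓝 (log W.det.re)) := by
    simpa using (tendsto_const_nhds (x := log W.det.re)).add
      ((tendsto_const_nhds (x := W⁻¹.trace.re)).div_atTop tendsto_id)
  refine tendsto_of_tendsto_of_tendsto_of_le_of_le' tendsto_const_nhds hupper ?_ ?_ <;>
    filter_upwards [eventually_gt_atTop 0] with P hP
  · linarith [log_det_add_le_Cpac hW hP]
  · linarith [Cpac_le hW hP]

/-- High-SNR asymptotics of the per-antenna-constrained capacity: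
`C_PAC(P) − m·log P → log det W` as `P → ∞`, i.e. the isotropic covariance `P·I`
is asymptotically optimal. -/
theorem stmt14 (m : ℕ) (hm : 1 ≤ m) (W : Matrix (Fin m) (Fin m) ℂ) (hW : W.PosDef) :
    Filter.Tendsto (fun P : ℝ => Cpac m W P - m * Real.log P)
      Filter.atTop (nhds (Real.log W.det.re)) :=
  stmt14_general m W hW
end

section
/- Let m = 2, W = diag(2, 1), P_T = 3/200, and P = 1/100. Then R* = diag(1/100, 1/200) is the unique maximizer of log det(I + W·R) over the joint constraint set S(P_T, P), and R* has rank 2; thus rank-one signaling (beamforming) is not optimal under the joint constraints even at this low SNR. If instead P = 3/200 (with the same P_T = 3/200 and W), then R* = diag(3/200, 0) maximizes log det(I + W·R) over S(P_T, P), so beamforming is optimal once the per-antenna constraints are loosened. -/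
open Matrix ComplexOrder

lemma Matrix.IsHermitian.im_apply_self {n : Type*} {R : Matrix n n ℂ} (hR : R.IsHermitian)
    (i : n) : (R i i).im = 0 := by
  simpa using congrArg Complex.im (hR.coe_re_apply_self i).symm

lemma Matrix.PosSemidef.normSq_apply_zero_one_le {R : Matrix (Fin 2) (Fin 2) ℂ}
    (hR : R.PosSemidef) : Complex.normSq (R 0 1) ≤ (R 0 0).re * (R 1 1).re := by
  have hdet := (Complex.nonneg_iff.mp hR.det_nonneg).1
  rw [det_fin_two, ← hR.isHermitian.apply 1 0] at hdet
  simp only [Complex.sub_re, Complex.mul_re, hR.isHermitian.im_apply_self, Complex.star_def,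
    Complex.conj_re, Complex.conj_im, Complex.normSq_apply] at hdet ⊢
  linarith

lemma Matrix.PosSemidef.re_apply_self_nonneg {n : Type*} {R : Matrix n n ℂ} (hR : R.PosSemidef)
    (i : n) : 0 ≤ (R i i).re :=
  (Complex.nonneg_iff.mp hR.diag_nonneg).1

lemma det_one_add_diagonal_mul_re {R : Matrix (Fin 2) (Fin 2) ℂ} (hR : R.IsHermitian)
    (w₀ w₁ : ℝ) :
    (1 + diagonal ![(w₀ : ℂ), w₁] * R).det.re =
      (1 + w₀ * (R 0 0).re) * (1 + w₁ * (R 1 1).re) - w₀ * w₁ * Complex.normSq (R 0 1) := by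
  simp [det_fin_two, Matrix.mul_apply, Fin.sum_univ_two, Complex.normSq_apply, hR.im_apply_self,
    ← hR.apply 1 0]
  ring

/- With `f a = (1 + 2a)(1 + T - a)`, the gap is `(1 + 2a)(T - a - c) + (f P - f a)` and
`f P - f a = (P - a)(1 + 2T - 2P - 2a)`. -/
lemma one_add_two_mul_mul_one_add_le {a c P T : ℝ} (ha : 0 ≤ a) (haP : a ≤ P)
    (hac : a + c ≤ T) (hPT : 4 * P ≤ 1 + 2 * T) :
    (1 + 2 * a) * (1 + c) ≤ (1 + 2 * P) * (1 + (T - P)) := by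
  nlinarith [mul_nonneg (by linarith : 0 ≤ 1 + 2 * a) (by linarith : 0 ≤ T - a - c),
    mul_nonneg (by linarith : 0 ≤ P - a) (by linarith : 0 ≤ 1 + 2 * T - 2 * P - 2 * a)]

lemma eq_of_one_add_two_mul_mul_one_add_eq {a c P T : ℝ} (ha : 0 ≤ a) (haP : a ≤ P)
    (hac : a + c ≤ T) (hPT : 4 * P ≤ 1 + 2 * T)
    (h : (1 + 2 * a) * (1 + c) = (1 + 2 * P) * (1 + (T - P))) : a = P ∧ c = T - P := by
  have haP' : a = P := by
    nlinarith [mul_nonneg (by linarith : 0 ≤ 1 + 2 * a) (by linarith : 0 ≤ T - a - c),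
      mul_nonneg (by linarith : 0 ≤ P - a) (by linarith : 0 ≤ 1 + 2 * T - 2 * P - 2 * a)]
  subst haP'
  exact ⟨rfl, by nlinarith⟩

lemma det_one_add_diagonal_two_one_mul_re {R : Matrix (Fin 2) (Fin 2) ℂ} (hR : R.IsHermitian) :
    (1 + diagonal ![(2 : ℂ), 1] * R).det.re =
      (1 + 2 * (R 0 0).re) * (1 + (R 1 1).re) - 2 * Complex.normSq (R 0 1) := by
  have h := det_one_add_diagonal_mul_re hR 2 1
  push_cast at h
  rw [h]
  ring

lemma det_one_add_diagonal_two_one_mul_re_pos {R : Matrix (Fin 2) (Fin 2) ℂ}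
    (hR : R.PosSemidef) : 0 < (1 + diagonal ![(2 : ℂ), 1] * R).det.re := by
  rw [det_one_add_diagonal_two_one_mul_re hR.isHermitian]
  nlinarith [hR.normSq_apply_zero_one_le, hR.re_apply_self_nonneg 0, hR.re_apply_self_nonneg 1]

lemma mutualInfo_diagonal (p q : ℝ) :
    mutualInfo (diagonal ![(2 : ℂ), 1]) (diagonal ![(p : ℂ), q]) =
      Real.log ((1 + 2 * p) * (1 + q)) := by
  rw [mutualInfo, det_one_add_diagonal_two_one_mul_re (isHermitian_diagonal_of_self_adjoint _ ?_)]
  · simp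
  · ext i; fin_cases i <;> simp

section JointSet

variable {P T : ℝ} {R : Matrix (Fin 2) (Fin 2) ℂ}

lemma diagonal_mem_jointSet {p q : ℝ} (hp : 0 ≤ p) (hq : 0 ≤ q) (hpq : p + q ≤ T)
    (hpP : p ≤ P) (hqP : q ≤ P) : diagonal ![(p : ℂ), q] ∈ jointSet 2 T P := by
  refine ⟨posSemidef_diagonal_iff.mpr fun i => ?_, ?_, fun i => ?_⟩
  · fin_cases i <;> simpa [Complex.nonneg_iff]
  · simpa [trace_fin_two] using hpq
  · fin_cases i <;> simpa

lemma det_re_le_of_mem_jointSet (hPT : 4 * P ≤ 1 + 2 * T) (hR : R ∈ jointSet 2 T P) :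
    (1 + diagonal ![(2 : ℂ), 1] * R).det.re ≤ (1 + 2 * P) * (1 + (T - P)) := by
  obtain ⟨hpsd, htr, hdiag⟩ := hR
  rw [trace_fin_two, Complex.add_re] at htr
  rw [det_one_add_diagonal_two_one_mul_re hpsd.isHermitian]
  linarith [one_add_two_mul_mul_one_add_le (hpsd.re_apply_self_nonneg 0) (hdiag 0) htr hPT,
    Complex.normSq_nonneg (R 0 1)]

lemma eq_diagonal_of_det_re_eq (hPT : 4 * P ≤ 1 + 2 * T) (hR : R ∈ jointSet 2 T P)
    (h : (1 + diagonal ![(2 : ℂ), 1] * R).det.re = (1 + 2 * P) * (1 + (T - P))) :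
    R = diagonal ![(P : ℂ), ((T - P : ℝ) : ℂ)] := by
  obtain ⟨hpsd, htr, hdiag⟩ := hR
  have hH := hpsd.isHermitian
  have ha := hpsd.re_apply_self_nonneg 0
  rw [trace_fin_two, Complex.add_re] at htr
  rw [det_one_add_diagonal_two_one_mul_re hH] at h
  have hle := one_add_two_mul_mul_one_add_le ha (hdiag 0) htr hPT
  have hb : R 0 1 = 0 := Complex.normSq_eq_zero.mp <| by
    linarith [Complex.normSq_nonneg (R 0 1)]
  obtain ⟨ha_eq, hc_eq⟩ := eq_of_one_add_two_mul_mul_one_add_eq ha (hdiag 0) htr hPT <| by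
    rw [hb, map_zero] at h; linarith
  ext i j
  fin_cases i <;> fin_cases j
  · exact Complex.ext (by simpa using ha_eq) (by simpa using hH.im_apply_self 0)
  · simpa using hb
  · simpa [← hH.apply 1 0] using hb
  · exact Complex.ext (by simpa using hc_eq) (by simpa using hH.im_apply_self 1)

theorem mutualInfo_le_of_mem_jointSet_s17 (hPT : 4 * P ≤ 1 + 2 * T) (hR : R ∈ jointSet 2 T P) :
    mutualInfo (diagonal ![(2 : ℂ), 1]) R ≤
      mutualInfo (diagonal ![(2 : ℂ), 1]) (diagonal ![(P : ℂ), ((T - P : ℝ) : ℂ)]) := by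
  rw [mutualInfo_diagonal]
  exact Real.log_le_log (det_one_add_diagonal_two_one_mul_re_pos hR.1)
    (det_re_le_of_mem_jointSet hPT hR)

theorem eq_of_mem_jointSet_of_mutualInfo_eq (hPT : 4 * P ≤ 1 + 2 * T) (hR : R ∈ jointSet 2 T P)
    (h : mutualInfo (diagonal ![(2 : ℂ), 1]) R =
      mutualInfo (diagonal ![(2 : ℂ), 1]) (diagonal ![(P : ℂ), ((T - P : ℝ) : ℂ)])) :
    R = diagonal ![(P : ℂ), ((T - P : ℝ) : ℂ)] := by
  rw [mutualInfo_diagonal] at h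
  have hpos := det_one_add_diagonal_two_one_mul_re_pos hR.1
  exact eq_diagonal_of_det_re_eq hPT hR <|
    Real.log_injOn_pos hpos (hpos.trans_le (det_re_le_of_mem_jointSet hPT hR)) h

end JointSet

/-- Low-SNR example: for `W = diag(2,1)`, `P_T = 3/200`, `P = 1/100`, the unique
optimal covariance `diag(1/100, 1/200)` has full rank 2 (beamforming is not optimal),
whereas loosening the per-antenna constraint to `P = 3/200` makes the rank-one
covariance `diag(3/200, 0)` optimal. -/
theorem stmt17 :
    (Matrix.diagonal ![(1 / 100 : ℂ), 1 / 200] ∈ jointSet 2 (3 / 200) (1 / 100) ∧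
      (∀ R ∈ jointSet 2 (3 / 200) (1 / 100),
        mutualInfo (Matrix.diagonal ![(2 : ℂ), 1]) R ≤
          mutualInfo (Matrix.diagonal ![(2 : ℂ), 1]) (Matrix.diagonal ![(1 / 100 : ℂ), 1 / 200])) ∧
      (∀ R ∈ jointSet 2 (3 / 200) (1 / 100),
        mutualInfo (Matrix.diagonal ![(2 : ℂ), 1]) R =
          mutualInfo (Matrix.diagonal ![(2 : ℂ), 1]) (Matrix.diagonal ![(1 / 100 : ℂ), 1 / 200]) →
        R = Matrix.diagonal ![(1 / 100 : ℂ), 1 / 200]) ∧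
      (Matrix.diagonal ![(1 / 100 : ℂ), 1 / 200]).rank = 2) ∧
    (Matrix.diagonal ![(3 / 200 : ℂ), 0] ∈ jointSet 2 (3 / 200) (3 / 200) ∧
      ∀ R ∈ jointSet 2 (3 / 200) (3 / 200),
        mutualInfo (Matrix.diagonal ![(2 : ℂ), 1]) R ≤
          mutualInfo (Matrix.diagonal ![(2 : ℂ), 1]) (Matrix.diagonal ![(3 / 200 : ℂ), 0])) := by
  have hR₁ : diagonal ![(1 / 100 : ℂ), 1 / 200] =
      diagonal ![((1 / 100 : ℝ) : ℂ), ((3 / 200 - 1 / 100 : ℝ) : ℂ)] := by norm_num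
  have hR₂ : diagonal ![(3 / 200 : ℂ), 0] =
      diagonal ![((3 / 200 : ℝ) : ℂ), ((3 / 200 - 3 / 200 : ℝ) : ℂ)] := by norm_num
  rw [hR₁, hR₂]
  refine ⟨⟨diagonal_mem_jointSet (by norm_num) (by norm_num) (by norm_num) le_rfl (by norm_num),
    fun R hR => mutualInfo_le_of_mem_jointSet_s17 (by norm_num) hR,
    fun R hR => eq_of_mem_jointSet_of_mutualInfo_eq (by norm_num) hR,
    ?_⟩,
    diagonal_mem_jointSet (by norm_num) (by norm_num) (by norm_num) le_rfl (by norm_num),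
    fun R hR => mutualInfo_le_of_mem_jointSet_s17 (by norm_num) hR⟩
  rw [rank_of_isUnit _ (by norm_num [isUnit_iff_isUnit_det])]
  simp
end
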